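/- Under the homogeneous Dawid–Skene model with constant assignment probability q, an infinite sequence of workers, and majority voting using the first M workers: for any fixed N ≥ 1, if lim_{M→∞} (1/M)·Σ_{i=1}^M w_i exists and is strictly greater than 1/L, then the error rate E_N^(M) = (1/N)·Σ_{j=1}^N 1{ŷ_j^(M) ≠ y_j} converges to 0 in probability as M → ∞. -/

import Mathlib

/-!
Fix an item with true label `k` and a rival label `h ≠ k`. Given `y = k`, the vote margin
`#{i < M | Z i = k} - #{i < M | Z i = h}` is a sum of `M` independent `[-1, 1]`-valued
variables with means `q (L w_i - 1) / (L - 1)`, whose average tends to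
`q (L wlim - 1) / (L - 1) > 0`. By Chebyshev's inequality the margin is `≤ 0` with probability
`O(1 / M)`. Majority voting errs on an item only if some rival label ties or beats the true one,
so a union bound over the finitely many items and label pairs gives the claim.
-/

open MeasureTheory ProbabilityTheory Real Filter

noncomputable section

namespace CrowdSeq

/-- Conditional law of `Z i j ∈ Fin (L+1)` (`0` = missing) given the true label `y j = k`
under the homogeneous Dawid–Skene model with constant assignment probability `q` and an
infinite sequence of worker accuracies `w`. -/
def condLaw {L : ℕ} (q : ℝ) (w : ℕ → ℝ) (i : ℕ) (k : Fin L) (h : Fin (L + 1)) : ℝ :=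
  if hz : h = 0 then 1 - q
  else q * (if h.pred hz = k then w i else (1 - w i) / ((L : ℝ) - 1))

end CrowdSeq

section Chebyshev

variable {ι : Type*} [Fintype ι] {Ω : ι → Type*} [∀ i, MeasurableSpace (Ω i)]
  {P : ∀ i, Measure (Ω i)} [∀ i, IsProbabilityMeasure (P i)]

lemma measure_pi_sum_nonpos_le {X : ∀ i, Ω i → ℝ} (hXm : ∀ i, Measurable (X i))
    (hX : ∀ i ω, |X i ω| ≤ 1) (hmean : 0 < ∑ i, ∫ ω, X i ω ∂P i) :
    Measure.pi P {ω | ∑ i, X i (ω i) ≤ 0}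
      ≤ ENNReal.ofReal (Fintype.card ι / (∑ i, ∫ ω, X i ω ∂P i) ^ 2) := by
  set m := ∑ i, ∫ ω, X i ω ∂P i
  set S : (∀ i, Ω i) → ℝ := ∑ i, fun ω => X i (ω i)
  have hXL2 : ∀ i, MemLp (X i) 2 (P i) := fun i =>
    MemLp.of_bound (hXm i).aestronglyMeasurable 1 (ae_of_all _ fun ω => (hX i ω))
  have hS : MemLp S 2 (Measure.pi P) :=
    memLp_finsetSum' _ fun i _ => (hXL2 i).comp_measurePreserving (measurePreserving_eval P i)
  have hES : (Measure.pi P)[S] = m := by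
    simp only [S, Finset.sum_apply]
    rw [integral_finsetSum _ fun i _ => integrable_comp_eval ((hXL2 i).integrable one_le_two)]
    exact Finset.sum_congr rfl fun i _ => integral_comp_eval (hXm i).aestronglyMeasurable
  have hVar : Var[S; Measure.pi P] ≤ Fintype.card ι := by
    rw [variance_sum_pi hXL2]
    calc ∑ i, Var[X i; P i] ≤ ∑ _i : ι, (1 : ℝ) := Finset.sum_le_sum fun i _ => by
          simpa using variance_le_sq_of_bounded (a := -1) (b := 1)
            (ae_of_all _ fun ω => abs_le.mp (hX i ω)) (hXm i).aemeasurable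
      _ = Fintype.card ι := by simp
  calc Measure.pi P {ω | ∑ i, X i (ω i) ≤ 0}
      ≤ Measure.pi P {ω | m ≤ |S ω - (Measure.pi P)[S]|} := by
        refine measure_mono fun ω hω => ?_
        have : S ω ≤ 0 := by simpa [S] using hω
        simp only [Set.mem_ofPred_eq, hES]
        rw [abs_sub_comm, abs_of_nonneg (by linarith)]
        linarith
    _ ≤ ENNReal.ofReal (Var[S; Measure.pi P] / m ^ 2) := meas_ge_le_variance_div_sq hS hmean
    _ ≤ ENNReal.ofReal (Fintype.card ι / m ^ 2) := by gcongr

end Chebyshev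

lemma tendsto_natCast_div_sum_range_sq {a : ℕ → ℝ} {c : ℝ} (hc : c ≠ 0)
    (h : Tendsto (fun M : ℕ => (M : ℝ)⁻¹ * ∑ i ∈ Finset.range M, a i) atTop (nhds c)) :
    Tendsto (fun M : ℕ => (M : ℝ) / (∑ i ∈ Finset.range M, a i) ^ 2) atTop (nhds 0) := by
  have := (tendsto_inv_atTop_nhds_zero_nat (𝕜 := ℝ)).div (h.pow 2) (pow_ne_zero 2 hc)
  rw [zero_div] at this
  refine this.congr' ?_
  filter_upwards [eventually_ne_atTop 0] with M hM
  simp only [Pi.div_apply]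
  field_simp

lemma tendsto_measure_of_subset_biUnion {α β ι : Type*} [MeasurableSpace α] {μ : Measure α}
    {l : Filter β} {s : Finset ι} {A : β → Set α} {B : ι → β → Set α}
    (hsub : ∀ b, A b ⊆ ⋃ i ∈ s, B i b) (hB : ∀ i ∈ s, Tendsto (fun b => μ (B i b)) l (nhds 0)) :
    Tendsto (fun b => μ (A b)) l (nhds 0) := by
  have hsum : Tendsto (fun b => ∑ i ∈ s, μ (B i b)) l (nhds 0) := by
    simpa using tendsto_finsetSum s hB
  exact tendsto_of_tendsto_of_tendsto_of_le_of_le tendsto_const_nhds hsum (fun _ => zero_le)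
    fun b => (measure_mono (hsub b)).trans (measure_biUnion_finset_le s _)

namespace CrowdSeq

variable {L : ℕ} {q : ℝ} {w : ℕ → ℝ}

@[simp] lemma condLaw_zero (i : ℕ) (k : Fin L) : condLaw q w i k 0 = 1 - q := rfl

@[simp] lemma condLaw_succ (i : ℕ) (k b : Fin L) :
    condLaw q w i k b.succ = q * if b = k then w i else (1 - w i) / ((L : ℝ) - 1) := by
  simp [condLaw]

lemma condLaw_nonneg (hq : q ∈ Set.Icc 0 1) (hw : ∀ i, w i ∈ Set.Icc 0 1) (i : ℕ) (k : Fin L)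
    (a : Fin (L + 1)) : 0 ≤ condLaw q w i k a := by
  obtain ⟨⟨hq0, hq1⟩, ⟨hw0, hw1⟩⟩ := And.intro hq (hw i)
  cases a using Fin.cases with
  | zero => simpa using hq1
  | succ b =>
    have : (1 : ℝ) ≤ L := by exact_mod_cast b.pos
    rw [condLaw_succ]
    split_ifs <;> positivity

lemma sum_condLaw (hL : 1 < L) (i : ℕ) (k : Fin L) : ∑ a, condLaw q w i k a = 1 := by
  have hL1 : (L : ℝ) - 1 ≠ 0 := sub_ne_zero.mpr (by exact_mod_cast hL.ne')
  rw [Fin.sum_univ_succ, condLaw_zero]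
  simp only [condLaw_succ, ← Finset.mul_sum, Finset.mem_univ, Finset.sum_ite, Finset.sum_const,
    Finset.filter_eq', Finset.filter_ne', if_true, Finset.card_erase_of_mem (Finset.mem_univ k),
    Finset.card_univ, Fintype.card_fin, Finset.card_singleton, nsmul_eq_mul, Nat.cast_sub hL.le,
    Nat.cast_one]
  field_simp
  ring

def labelPMF (hL : 1 < L) (hq : q ∈ Set.Icc 0 1) (hw : ∀ i, w i ∈ Set.Icc 0 1) (i : ℕ)
    (k : Fin L) : PMF (Fin (L + 1)) :=
  PMF.ofFintype (fun a => ENNReal.ofReal (condLaw q w i k a)) <| by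
    rw [← ENNReal.ofReal_sum_of_nonneg fun a _ => condLaw_nonneg hq hw i k a, sum_condLaw hL,
      ENNReal.ofReal_one]

def voteMargin (k h : Fin L) (a : Fin (L + 1)) : ℝ :=
  (if a = k.succ then 1 else 0) - if a = h.succ then 1 else 0

lemma abs_voteMargin_le_one (k h : Fin L) (a : Fin (L + 1)) : |voteMargin k h a| ≤ 1 := by
  unfold voteMargin
  split_ifs <;> norm_num

lemma integral_voteMargin (hL : 1 < L) (hq : q ∈ Set.Icc 0 1) (hw : ∀ i, w i ∈ Set.Icc 0 1)
    (i : ℕ) {k h : Fin L} (hne : h ≠ k) :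
    ∫ a, voteMargin k h a ∂(labelPMF hL hq hw i k).toMeasure = q * (L * w i - 1) / (L - 1) := by
  have hL1 : (L : ℝ) - 1 ≠ 0 := sub_ne_zero.mpr (by exact_mod_cast hL.ne')
  simp only [PMF.integral_eq_sum, labelPMF, PMF.ofFintype_apply, voteMargin, smul_eq_mul,
    mul_sub, mul_ite, mul_one, mul_zero, Finset.sum_sub_distrib, Finset.sum_ite_eq',
    Finset.mem_univ, if_true]
  rw [ENNReal.toReal_ofReal (condLaw_nonneg hq hw i k _),
    ENNReal.toReal_ofReal (condLaw_nonneg hq hw i k _), condLaw_succ, condLaw_succ, if_pos rfl,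
    if_neg hne]
  field_simp
  ring

section Link

variable {Ω : Type*} [MeasurableSpace Ω] {μ : Measure Ω} [IsProbabilityMeasure μ]
  {yj : Ω → Fin L} {Zj : ℕ → Ω → Fin (L + 1)} {pk : ℝ} {k : Fin L}

lemma measure_label_and_eq_le (hL : 1 < L) (hq : q ∈ Set.Icc 0 1) (hw : ∀ i, w i ∈ Set.Icc 0 1)
    (hlaw : ∀ (M : ℕ) (h : ℕ → Fin (L + 1)), (μ {ω | yj ω = k ∧ ∀ i < M, Zj i ω = h i}).toReal
      = pk * ∏ i ∈ Finset.range M, condLaw q w i k (h i))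
    {M : ℕ} (v : Fin M → Fin (L + 1)) :
    μ {ω | yj ω = k ∧ (fun i : Fin M => Zj i ω) = v}
      ≤ Measure.pi (fun i : Fin M => (labelPMF hL hq hw i k).toMeasure) {v} := by
  have hpk : pk ≤ 1 := by
    simpa using (hlaw 0 fun _ => 0).symm.trans_le measureReal_le_one
  -- `hlaw` only speaks of labellings of all workers; extend `v` by `0` beyond `M`
  set h : ℕ → Fin (L + 1) := Function.extend Fin.val v 0
  have hh : ∀ i : Fin M, h i = v i := Fin.val_injective.extend_apply v 0
  have hset : {ω | yj ω = k ∧ (fun i : Fin M => Zj i ω) = v}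
      = {ω | yj ω = k ∧ ∀ i < M, Zj i ω = h i} := by
    ext ω
    simp only [Set.mem_ofPred_eq, funext_iff, Fin.forall_iff, ← hh]
  have hprod : 0 ≤ ∏ i : Fin M, condLaw q w i k (v i) :=
    Finset.prod_nonneg fun i _ => condLaw_nonneg hq hw i k _
  rw [hset, ← ENNReal.ofReal_toReal (measure_ne_top μ _), hlaw, Measure.pi_singleton,
    ← Fin.prod_univ_eq_prod_range (fun i => condLaw q w i k (h i))]
  simp only [PMF.toMeasure_apply_singleton _ _ (measurableSet_singleton _), labelPMF,
    PMF.ofFintype_apply, hh]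
  rw [← ENNReal.ofReal_prod_of_nonneg fun i _ => condLaw_nonneg hq hw (i : Fin M) k (v i)]
  exact ENNReal.ofReal_le_ofReal (mul_le_of_le_one_left hprod hpk)

lemma measure_label_and_mem_le (hL : 1 < L) (hq : q ∈ Set.Icc 0 1) (hw : ∀ i, w i ∈ Set.Icc 0 1)
    (hlaw : ∀ (M : ℕ) (h : ℕ → Fin (L + 1)), (μ {ω | yj ω = k ∧ ∀ i < M, Zj i ω = h i}).toReal
      = pk * ∏ i ∈ Finset.range M, condLaw q w i k (h i))
    {M : ℕ} (T : Set (Fin M → Fin (L + 1))) :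
    μ {ω | yj ω = k ∧ (fun i : Fin M => Zj i ω) ∈ T}
      ≤ Measure.pi (fun i : Fin M => (labelPMF hL hq hw i k).toMeasure) T := by
  classical
  calc μ {ω | yj ω = k ∧ (fun i : Fin M => Zj i ω) ∈ T}
      ≤ μ (⋃ v ∈ T.toFinset, {ω | yj ω = k ∧ (fun i : Fin M => Zj i ω) = v}) :=
        measure_mono fun ω hω => Set.mem_biUnion (Set.mem_toFinset.mpr hω.2) ⟨hω.1, rfl⟩
    _ ≤ ∑ v ∈ T.toFinset, μ {ω | yj ω = k ∧ (fun i : Fin M => Zj i ω) = v} :=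
        measure_biUnion_finset_le _ _
    _ ≤ ∑ v ∈ T.toFinset, Measure.pi (fun i : Fin M => (labelPMF hL hq hw i k).toMeasure) {v} :=
        Finset.sum_le_sum fun v _ => measure_label_and_eq_le hL hq hw hlaw v
    _ = Measure.pi (fun i : Fin M => (labelPMF hL hq hw i k).toMeasure) T := by
        rw [sum_measure_singleton, Set.coe_toFinset]

end Link

theorem tendsto_measure_label_and_count_le {Ω : Type*} [MeasurableSpace Ω] (μ : Measure Ω)
    [IsProbabilityMeasure μ] (hL : 1 < L) (hq : q ∈ Set.Ioc 0 1) (hw : ∀ i, w i ∈ Set.Icc 0 1)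
    {yj : Ω → Fin L} {Zj : ℕ → Ω → Fin (L + 1)} {pk : ℝ} {k h : Fin L} (hne : h ≠ k)
    (hlaw : ∀ (M : ℕ) (z : ℕ → Fin (L + 1)), (μ {ω | yj ω = k ∧ ∀ i < M, Zj i ω = z i}).toReal
      = pk * ∏ i ∈ Finset.range M, condLaw q w i k (z i))
    {wlim : ℝ} (hwlim : Tendsto (fun M : ℕ => (M : ℝ)⁻¹ * ∑ i ∈ Finset.range M, w i)
      atTop (nhds wlim))
    (hwgt : 1 / (L : ℝ) < wlim) :
    Tendsto (fun M : ℕ => μ {ω | yj ω = k ∧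
        (∑ i ∈ Finset.range M, if Zj i ω = k.succ then (1 : ℝ) else 0)
          ≤ ∑ i ∈ Finset.range M, if Zj i ω = h.succ then (1 : ℝ) else 0})
      atTop (nhds 0) := by
  have hL0 : (0 : ℝ) < L := by exact_mod_cast (Nat.zero_lt_one.trans hL)
  have hL1 : (0 : ℝ) < L - 1 := sub_pos.mpr (by exact_mod_cast hL)
  have hq' : q ∈ Set.Icc 0 1 := Set.Ioc_subset_Icc_self hq
  set a : ℕ → ℝ := fun i => q * (L * w i - 1) / (L - 1)
  set c := q * (L * wlim - 1) / (L - 1)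
  have hc : 0 < c := by
    have : 1 < L * wlim := by rwa [div_lt_iff₀' hL0] at hwgt
    exact div_pos (mul_pos hq.1 (by linarith)) hL1
  have havg : Tendsto (fun M : ℕ => (M : ℝ)⁻¹ * ∑ i ∈ Finset.range M, a i) atTop (nhds c) := by
    refine ((((hwlim.const_mul (L : ℝ)).sub_const 1).const_mul q).div_const _).congr' ?_
    filter_upwards [eventually_ne_atTop 0] with M hM
    simp only [a, ← Finset.sum_div, ← Finset.mul_sum, Finset.sum_sub_distrib, Finset.sum_const,
      Finset.card_range, nsmul_eq_mul, mul_one]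
    field_simp
  have hmean : ∀ M, ∑ i : Fin M, ∫ x, voteMargin k h x ∂(labelPMF hL hq' hw i k).toMeasure
      = ∑ i ∈ Finset.range M, a i := fun M => by
    simp only [integral_voteMargin hL hq' hw _ hne, a]
    exact Fin.sum_univ_eq_sum_range a M
  have hcount : ∀ M ω, ((∑ i ∈ Finset.range M, if Zj i ω = k.succ then (1 : ℝ) else 0)
        ≤ ∑ i ∈ Finset.range M, if Zj i ω = h.succ then (1 : ℝ) else 0)
      ↔ ∑ i : Fin M, voteMargin k h (Zj i ω) ≤ 0 := fun M ω => by
    rw [Fin.sum_univ_eq_sum_range (fun i => voteMargin k h (Zj i ω)), ← sub_nonpos]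
    simp only [voteMargin, Finset.sum_sub_distrib]
  have hbound : ∀ᶠ M : ℕ in atTop, μ {ω | yj ω = k ∧
        (∑ i ∈ Finset.range M, if Zj i ω = k.succ then (1 : ℝ) else 0)
          ≤ ∑ i ∈ Finset.range M, if Zj i ω = h.succ then (1 : ℝ) else 0}
      ≤ ENNReal.ofReal (M / (∑ i ∈ Finset.range M, a i) ^ 2) := by
    filter_upwards [havg.eventually_const_lt hc] with M hM
    have hpos : 0 < ∑ i ∈ Finset.range M, a i := pos_of_mul_pos_right hM (by positivity)
    simp only [hcount]
    calc _ ≤ _ := measure_label_and_mem_le hL hq' hw hlaw {v | ∑ i, voteMargin k h (v i) ≤ 0}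
      _ ≤ _ := measure_pi_sum_nonpos_le (fun _ => measurable_of_countable _)
          (fun _ => abs_voteMargin_le_one k h) (by rwa [hmean])
      _ = _ := by rw [hmean, Fintype.card_fin]
  have hlim := ENNReal.tendsto_ofReal (tendsto_natCast_div_sum_range_sq hc.ne' havg)
  rw [ENNReal.ofReal_zero] at hlim
  exact tendsto_of_tendsto_of_tendsto_of_le_of_le' tendsto_const_nhds hlim
    (Eventually.of_forall fun _ => zero_le) hbound

end CrowdSeq

theorem mv_error_rate_tendsto_zero_in_probability_general
    {Ω : Type*} [MeasurableSpace Ω] (μ : Measure Ω) [IsProbabilityMeasure μ]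
    {N L : ℕ} (hL : 2 ≤ L)
    (y : Fin N → Ω → Fin L) (Z : ℕ → Fin N → Ω → Fin (L + 1))
    (pri : Fin L → ℝ) (q : ℝ) (w : ℕ → ℝ)
    (hq0 : 0 < q) (hq1 : q ≤ 1)
    (hw0 : ∀ i, 0 ≤ w i) (hw1 : ∀ i, w i ≤ 1)
    (hlaw : ∀ (j : Fin N) (k : Fin L) (M : ℕ) (h : ℕ → Fin (L + 1)),
      (μ {ω | y j ω = k ∧ ∀ i < M, Z i j ω = h i}).toReal
        = pri k * ∏ i ∈ Finset.range M, CrowdSeq.condLaw q w i k (h i))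
    (yhatM : ℕ → Fin N → Ω → Fin L)
    (hyhat : ∀ (M : ℕ) (j : Fin N) (ω : Ω) (k : Fin L),
      (∑ i ∈ Finset.range M, if Z i j ω = k.succ then (1 : ℝ) else 0)
        ≤ ∑ i ∈ Finset.range M, if Z i j ω = (yhatM M j ω).succ then (1 : ℝ) else 0)
    (wlim : ℝ)
    (hwlim : Tendsto (fun M : ℕ => (M : ℝ)⁻¹ * ∑ i ∈ Finset.range M, w i)
      atTop (nhds wlim))
    (hwgt : 1 / (L : ℝ) < wlim) :
    ∀ ε : ℝ, 0 < ε →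
      Tendsto (fun M : ℕ =>
          (μ {ω | ε ≤ (N : ℝ)⁻¹ *
            ∑ j, if yhatM M j ω ≠ y j ω then (1 : ℝ) else 0}).toReal)
        atTop (nhds 0) := by
  intro ε hε
  -- item `j` has true label `k`, yet label `h ≠ k` gets at least as many of the first `M` votes
  let E : Fin N × Fin L × Fin L → ℕ → Set Ω := fun t M => {ω | y t.1 ω = t.2.1 ∧
    (∑ i ∈ Finset.range M, if Z i t.1 ω = t.2.1.succ then (1 : ℝ) else 0)
      ≤ ∑ i ∈ Finset.range M, if Z i t.1 ω = t.2.2.succ then (1 : ℝ) else 0}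
  let bad := Finset.univ.filter fun t : Fin N × Fin L × Fin L => t.2.2 ≠ t.2.1
  have hE : ∀ t ∈ bad, Tendsto (fun M => μ (E t M)) atTop (nhds 0) := fun t ht =>
    CrowdSeq.tendsto_measure_label_and_count_le μ hL ⟨hq0, hq1⟩ (fun i => ⟨hw0 i, hw1 i⟩)
      (Finset.mem_filter.mp ht).2 (hlaw t.1 t.2.1) hwlim hwgt
  have hsub : ∀ M, {ω | ε ≤ (N : ℝ)⁻¹ * ∑ j, if yhatM M j ω ≠ y j ω then (1 : ℝ) else 0}
      ⊆ ⋃ t ∈ bad, E t M := by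
    intro M ω hω
    obtain ⟨j, hj⟩ : ∃ j, yhatM M j ω ≠ y j ω := by
      by_contra! hall
      simp [hall] at hω
      linarith
    exact Set.mem_biUnion (x := (j, y j ω, yhatM M j ω)) (by simpa [bad] using hj)
      ⟨rfl, hyhat M j ω (y j ω)⟩
  exact (ENNReal.tendsto_toReal ENNReal.zero_ne_top).comp
    (tendsto_measure_of_subset_biUnion hsub hE)

/-- Under the homogeneous Dawid–Skene model with constant assignment
probability `q`, an infinite sequence of workers, and majority voting using the first `M`
workers: if `lim_M (1/M)Σ_{i<M} w_i` exists and exceeds `1/L`, then the error rate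
`E_N^(M)` converges to `0` in probability as `M → ∞`. -/
theorem mv_error_rate_tendsto_zero_in_probability
    {Ω : Type*} [MeasurableSpace Ω] (μ : Measure Ω) [IsProbabilityMeasure μ]
    {N L : ℕ} (hN : 0 < N) (hL : 2 ≤ L)
    (y : Fin N → Ω → Fin L) (Z : ℕ → Fin N → Ω → Fin (L + 1))
    (hym : ∀ j, Measurable (y j)) (hZm : ∀ i j, Measurable (Z i j))
    (pri : Fin L → ℝ) (q : ℝ) (w : ℕ → ℝ)
    (hpri : ∀ k, 0 ≤ pri k) (hq0 : 0 < q) (hq1 : q ≤ 1)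
    (hw0 : ∀ i, 0 ≤ w i) (hw1 : ∀ i, w i ≤ 1)
    (hprior : ∀ (j : Fin N) (k : Fin L), (μ {ω | y j ω = k}).toReal = pri k)
    (hlaw : ∀ (j : Fin N) (k : Fin L) (M : ℕ) (h : ℕ → Fin (L + 1)),
      (μ {ω | y j ω = k ∧ ∀ i < M, Z i j ω = h i}).toReal
        = pri k * ∏ i ∈ Finset.range M, CrowdSeq.condLaw q w i k (h i))
    (hindep : iIndepFun
      (fun j ω => (y j ω, fun i : ℕ => Z i j ω)) μ)
    (yhatM : ℕ → Fin N → Ω → Fin L) (hyhatm : ∀ M j, Measurable (yhatM M j))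
    (hyhat : ∀ (M : ℕ) (j : Fin N) (ω : Ω) (k : Fin L),
      (∑ i ∈ Finset.range M, if Z i j ω = k.succ then (1 : ℝ) else 0)
        ≤ ∑ i ∈ Finset.range M, if Z i j ω = (yhatM M j ω).succ then (1 : ℝ) else 0)
    (wlim : ℝ)
    (hwlim : Tendsto (fun M : ℕ => (M : ℝ)⁻¹ * ∑ i ∈ Finset.range M, w i)
      atTop (nhds wlim))
    (hwgt : 1 / (L : ℝ) < wlim) :
    ∀ ε : ℝ, 0 < ε →
      Tendsto (fun M : ℕ =>
          (μ {ω | ε ≤ (N : ℝ)⁻¹ *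
            ∑ j, if yhatM M j ω ≠ y j ω then (1 : ℝ) else 0}).toReal)
        atTop (nhds 0) :=
  mv_error_rate_tendsto_zero_in_probability_general μ hL y Z pri q w hq0 hq1 hw0 hw1 hlaw yhatM
    hyhat wlim hwlim hwgt
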